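/- arXiv:1707.03022 — 4 statements merged into one kernel-verified Lean document; each statement's English description precedes it below -/
import Mathlib

section
/- In the ring of formal power series ℤ[[x, y]] in two variables, for integers m, n, k, i, j with m, n ≥ 0, 0 ≤ k ≤ min(m, n), i, j ≥ 0 and i+j ≥ k, the coefficient of x^j y^i in the series (x+y)^{i+j−k} · (1−x)^{−(m−k+1)} · (1+y)^{−(n−k+1)} (where the inverses exist since 1−x and 1+y are units in ℤ[[x, y]]) equals c_{m,n,k}(i, j). -/
/-- Binomial coefficient for integer arguments: `C a b = a.choose b` when
`0 ≤ b ≤ a`, and `0` otherwise. -/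
def C (a b : ℤ) : ℤ := if 0 ≤ b ∧ b ≤ a then (a.toNat.choose b.toNat : ℤ) else 0

/-- The coordinate function `c_{m,n,k}(i,j)`. -/
def c (m n k i j : ℤ) : ℤ :=
  ∑ l ∈ Finset.range (k.toNat + 1),
    (-1 : ℤ) ^ l * C (i + j - k) (i - l) * C (m - l) (k - l) * C (n - k + l) l

/-!
Expand `(x + y) ^ N` binomially, `N = i + j - k`, and use
`(1 - r x) ^ (-(d + 1)) = ∑ q, r ^ q * C(d + q, d) x ^ q` for `r = 1` and `r = -1`.
The coefficient of `x ^ j y ^ i` becomes a sum over the `x`-exponent `a` of `(x + y) ^ N`;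
substituting `l = a + k - j`, the exponent of `y` taken from `(1 + y) ^ (-(n - k + 1))`,
turns it into the sum defining `c`.
-/

theorem Finset.sum_choose_mul_ite_mul_ite {R : Type*} [CommSemiring R] {N i j k : ℕ}
    (hN : N + k = i + j) (F G : ℕ → R) :
    ∑ a ∈ range (N + 1), (N.choose a : R) *
        ((if a ≤ j then F (j - a) else 0) * (if N - a ≤ i then G (i - (N - a)) else 0)) =
      ∑ l ∈ range (k + 1),
        (if l ≤ i then (N.choose (i - l) : R) else 0) * (F (k - l) * G l) := by
  rw [← sum_filter_of_ne (s := range (N + 1)) (p := fun a ↦ a ≤ j ∧ N - a ≤ i),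
    ← sum_filter_of_ne (s := range (k + 1)) (p := fun l ↦ l ≤ i ∧ i - l ≤ N)]
  · refine sum_nbij' (fun a ↦ a + k - j) (fun l ↦ l + j - k) ?_ ?_ ?_ ?_ ?_ <;>
      simp only [mem_filter, mem_range]
    iterate 4 omega
    · rintro a ⟨haN, haj, hai⟩
      rw [if_pos haj, if_pos hai, if_pos (by omega), ← Nat.choose_symm (by omega : a ≤ N),
        show i - (a + k - j) = N - a by omega, show k - (a + k - j) = j - a by omega,
        show i - (N - a) = a + k - j by omega]
  · intro l _ h
    contrapose! h
    by_cases hli : l ≤ i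
    · rw [if_pos hli, Nat.choose_eq_zero_of_lt (h hli), Nat.cast_zero, zero_mul]
    · rw [if_neg hli, zero_mul]
  · intro a _ h
    contrapose! h
    by_cases haj : a ≤ j
    · rw [if_neg (not_le.mpr (h haj)), mul_zero, mul_zero]
    · rw [if_neg haj, zero_mul, mul_zero]

theorem C_natCast (a b : ℕ) : C a b = a.choose b := by
  unfold C
  split_ifs with h
  · simp
  · rw [Nat.choose_eq_zero_of_lt (by omega), Nat.cast_zero]

theorem C_of_neg (a : ℤ) {b : ℤ} (hb : b < 0) : C a b = 0 :=
  if_neg (by omega)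

theorem c_natCast_eq_sum {i j k M₁ M₂ : ℕ} (h : k ≤ i + j) :
    c (k + M₁) (k + M₂) k i j = ∑ l ∈ Finset.range (k + 1),
      (if l ≤ i then ((i + j - k).choose (i - l) : ℤ) else 0) *
        ((M₁ + (k - l)).choose M₁ * ((-1) ^ l * (M₂ + l).choose M₂)) := by
  unfold c
  rw [Int.toNat_natCast]
  refine Finset.sum_congr rfl fun l hl ↦ ?_
  have hlk : l ≤ k := Nat.lt_succ_iff.mp (Finset.mem_range.mp hl)
  have hx : C (k + M₁ - l) (k - l) = (M₁ + (k - l)).choose M₁ := by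
    rw [show (k + M₁ - l : ℤ) = (M₁ + (k - l) : ℕ) by omega,
      show (k - l : ℤ) = (k - l : ℕ) by omega, C_natCast, Nat.choose_symm_add]
  have hy : C (k + M₂ - k + l) l = (M₂ + l).choose M₂ := by
    rw [show (k + M₂ - k + l : ℤ) = (M₂ + l : ℕ) by omega, C_natCast, Nat.choose_symm_add]
  rw [hx, hy]
  split_ifs with hli
  · rw [show (i + j - k : ℤ) = (i + j - k : ℕ) by omega,
      show (i - l : ℤ) = (i - l : ℕ) by omega, C_natCast]
    ring
  · rw [C_of_neg _ (by omega)]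
    ring

open Finsupp

namespace PowerSeries

variable {σ R : Type*} [CommSemiring R]

theorem coeff_toMvPowerSeries_single (s : σ) (f : PowerSeries R) (p : ℕ) :
    MvPowerSeries.coeff (single s p) (f.toMvPowerSeries s) = coeff p f := by
  have := MvPowerSeries.coeff_embDomain_rename (Function.Embedding.punit s) f (single () p)
  rwa [embDomain_single] at this

theorem coeff_toMvPowerSeries_of_ne_single {s : σ} (f : PowerSeries R) {d : σ →₀ ℕ}
    (hd : d ≠ single s (d s)) : MvPowerSeries.coeff d (f.toMvPowerSeries s) = 0 := by
  refine MvPowerSeries.coeff_rename_eq_zero _ f ?_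
  rintro ⟨e, rfl⟩
  rw [unique_single e, mapDomain_single] at hd
  simp at hd

theorem coeff_toMvPowerSeries_mul_toMvPowerSeries {s t : σ} (hst : s ≠ t)
    (f g : PowerSeries R) (p q : ℕ) :
    MvPowerSeries.coeff (single s p + single t q) (f.toMvPowerSeries s * g.toMvPowerSeries t) =
      coeff p f * coeff q g := by
  classical
  rw [MvPowerSeries.coeff_mul, Finset.sum_eq_single (single s p, single t q),
    coeff_toMvPowerSeries_single, coeff_toMvPowerSeries_single]
  · rintro ⟨d₁, d₂⟩ hd hne
    by_cases h₁ : d₁ = single s (d₁ s)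
    · by_cases h₂ : d₂ = single t (d₂ t)
      · refine absurd ?_ hne
        have hsum := Finset.HasAntidiagonal.mem_antidiagonal.mp hd
        have hs := congr($hsum s)
        have ht := congr($hsum t)
        rw [h₁, h₂] at hs ht ⊢
        simp only [Finsupp.coe_add, Pi.add_apply, single_eq_same, ne_eq, hst, hst.symm,
          not_false_eq_true, single_eq_of_ne, add_zero, zero_add] at hs ht
        rw [hs, ht]
      · rw [coeff_toMvPowerSeries_of_ne_single g h₂, mul_zero]
    · rw [coeff_toMvPowerSeries_of_ne_single f h₁, zero_mul]
  · simp

theorem coeff_X_add_X_pow_mul_toMvPowerSeries_mul_toMvPowerSeries {s t : σ}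
    (hst : s ≠ t) (N p q : ℕ) (f g : PowerSeries R) :
    MvPowerSeries.coeff (single s p + single t q)
        ((MvPowerSeries.X s + MvPowerSeries.X t) ^ N * f.toMvPowerSeries s * g.toMvPowerSeries t) =
      ∑ a ∈ Finset.range (N + 1),
        (N.choose a : R) * (coeff p (X ^ a * f) * coeff q (X ^ (N - a) * g)) := by
  have expand : (MvPowerSeries.X s + MvPowerSeries.X t) ^ N * f.toMvPowerSeries s *
      g.toMvPowerSeries t = ∑ a ∈ Finset.range (N + 1), MvPowerSeries.C (N.choose a : R) *
        ((X ^ a * f).toMvPowerSeries s * (X ^ (N - a) * g).toMvPowerSeries t) := by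
    simp only [add_pow, Finset.sum_mul, map_mul, map_pow, toMvPowerSeries_X, map_natCast]
    exact Finset.sum_congr rfl fun a _ ↦ by ring
  simp only [expand, map_sum, MvPowerSeries.coeff_C_mul,
    coeff_toMvPowerSeries_mul_toMvPowerSeries hst]

theorem coeff_rescale_invOneSubPow_succ {R : Type*} [CommRing R] (r : R) (d n : ℕ) :
    coeff n (rescale r (invOneSubPow R (d + 1)).val) = r ^ n * (d + n).choose d := by
  rw [coeff_rescale, invOneSubPow_val_succ_eq_mk_add_choose, coeff_mk]

end PowerSeries

namespace MvPowerSeries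

variable {σ R : Type*} [CommRing R]

theorem invOfUnit_pow_eq_of_pow_mul_eq_one {a b : MvPowerSeries σ R} (ha : constantCoeff a = 1)
    {d : ℕ} (h : a ^ d * b = 1) : a.invOfUnit 1 ^ d = b :=
  calc a.invOfUnit 1 ^ d = a.invOfUnit 1 ^ d * (a ^ d * b) := by rw [h, mul_one]
    _ = (a * a.invOfUnit 1) ^ d * b := by ring
    _ = b := by rw [mul_invOfUnit a 1 (by simpa using ha), one_pow, one_mul]

theorem invOfUnit_one_sub_C_mul_X_pow (r : R) (s : σ) (d : ℕ) :
    (1 - C r * X s).invOfUnit 1 ^ d =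
      (PowerSeries.rescale r (PowerSeries.invOneSubPow R d).val).toMvPowerSeries s := by
  refine invOfUnit_pow_eq_of_pow_mul_eq_one (by simp) ?_
  have h := (PowerSeries.invOneSubPow R d).inv_val
  rw [PowerSeries.invOneSubPow_inv_eq_one_sub_pow] at h
  have := congr(PowerSeries.toMvPowerSeries s (PowerSeries.rescale r $h))
  simpa only [map_mul, map_pow, map_sub, map_one, PowerSeries.rescale_X,
    PowerSeries.toMvPowerSeries_C, PowerSeries.toMvPowerSeries_X] using this

end MvPowerSeries

open MvPowerSeries in
theorem generating_function_for_weight_vectors_general (m n k i j : ℤ)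
    (hk0 : 0 ≤ k) (hkm : k ≤ m) (hkn : k ≤ n)
    (hi : 0 ≤ i) (hj : 0 ≤ j) (hij : k ≤ i + j) :
    MvPowerSeries.coeff (R := ℤ) (Finsupp.single 0 j.toNat + Finsupp.single 1 i.toNat)
      ((X 0 + X 1 : MvPowerSeries (Fin 2) ℤ) ^ (i + j - k).toNat *
        ((1 - X 0 : MvPowerSeries (Fin 2) ℤ).invOfUnit 1) ^ (m - k + 1).toNat *
        ((1 + X 1 : MvPowerSeries (Fin 2) ℤ).invOfUnit 1) ^ (n - k + 1).toNat) =
    c m n k i j := by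
  lift i to ℕ using hi
  lift j to ℕ using hj
  lift k to ℕ using hk0
  obtain ⟨M₁, rfl⟩ : ∃ M₁ : ℕ, m = k + M₁ := ⟨(m - k).toNat, by omega⟩
  obtain ⟨M₂, rfl⟩ : ∃ M₂ : ℕ, n = k + M₂ := ⟨(n - k).toNat, by omega⟩
  have hx : (1 - X 0 : MvPowerSeries (Fin 2) ℤ) = 1 - MvPowerSeries.C 1 * X 0 := by simp
  have hy : (1 + X 1 : MvPowerSeries (Fin 2) ℤ) = 1 - MvPowerSeries.C (-1) * X 1 := by simp
  rw [show (i + j - k : ℤ).toNat = i + j - k by omega,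
    show (k + M₁ - k + 1 : ℤ).toNat = M₁ + 1 by omega,
    show (k + M₂ - k + 1 : ℤ).toNat = M₂ + 1 by omega, Int.toNat_natCast, Int.toNat_natCast,
    hx, hy, invOfUnit_one_sub_C_mul_X_pow, invOfUnit_one_sub_C_mul_X_pow,
    PowerSeries.coeff_X_add_X_pow_mul_toMvPowerSeries_mul_toMvPowerSeries (by decide),
    c_natCast_eq_sum (by omega)]
  simp only [PowerSeries.coeff_X_pow_mul', PowerSeries.coeff_rescale_invOneSubPow_succ, one_pow,
    one_mul]
  exact Finset.sum_choose_mul_ite_mul_ite (by omega) (fun d ↦ ((M₁ + d).choose M₁ : ℤ))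
    (fun d ↦ (-1) ^ d * ((M₂ + d).choose M₂ : ℤ))

open MvPowerSeries in
theorem generating_function_for_weight_vectors (m n k i j : ℤ)
    (hm : 0 ≤ m) (hn : 0 ≤ n) (hk0 : 0 ≤ k) (hkm : k ≤ m) (hkn : k ≤ n)
    (hi : 0 ≤ i) (hj : 0 ≤ j) (hij : k ≤ i + j) :
    MvPowerSeries.coeff (R := ℤ) (Finsupp.single 0 j.toNat + Finsupp.single 1 i.toNat)
      ((X 0 + X 1 : MvPowerSeries (Fin 2) ℤ) ^ (i + j - k).toNat *
        ((1 - X 0 : MvPowerSeries (Fin 2) ℤ).invOfUnit 1) ^ (m - k + 1).toNat *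
        ((1 + X 1 : MvPowerSeries (Fin 2) ℤ).invOfUnit 1) ^ (n - k + 1).toNat) =
    c m n k i j :=
  generating_function_for_weight_vectors_general m n k i j hk0 hkm hkn hi hj hij
end

section
/- (First orthogonality relation.) For integers m, n, k, k', p with m, n ≥ 0, 0 ≤ k ≤ min(m, n), 0 ≤ k' ≤ min(m, n), and max(k, k') ≤ p ≤ m+n−max(k, k'), one has Σ_{i+j=p, 0≤i≤m, 0≤j≤n} c_{m,n,k}(i, j) · c_{m,n,k'}(m−i, n−j) = (-1)^k · δ_{k,k'} · D(m, n, k), where δ_{k,k'} is the Kronecker delta. -/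
/-- The normalizing factor `D(m,n,k)`. -/
def D (m n k : ℤ) : ℤ := C (m + n - k + 1) k * C (m + n - 2 * k) (m - k)


open Finset

lemma C_nat (A B : ℕ) : C (A : ℤ) (B : ℤ) = (A.choose B : ℤ) := by
  unfold C
  split
  · simp
  · next h =>
    have hBA : A < B := by omega
    simp [Nat.choose_eq_zero_of_lt hBA]

lemma C_neg {a b : ℤ} (h : b < 0) : C a b = 0 := by unfold C; rw [if_neg]; omega

lemma C_gt {a b : ℤ} (h : a < b) : C a b = 0 := by unfold C; rw [if_neg]; omega

lemma C_pascal (a b : ℤ) (ha : 0 ≤ a) : C (a + 1) b = C a b + C a (b - 1) := by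
  rcases lt_trichotomy b 0 with hb | hb | hb
  · rw [C_neg hb, C_neg hb, C_neg (by omega)]; ring
  · subst hb
    rw [C_neg (by norm_num : (0:ℤ) - 1 < 0)]
    unfold C
    rw [if_pos ⟨le_refl 0, by omega⟩, if_pos ⟨le_refl 0, ha⟩]
    simp
  · obtain ⟨A, rfl⟩ : ∃ A : ℕ, a = (A : ℤ) := ⟨a.toNat, (Int.toNat_of_nonneg ha).symm⟩
    obtain ⟨B, rfl⟩ : ∃ B : ℕ, b = ((B : ℤ) + 1) := ⟨(b - 1).toNat, by omega⟩
    have h1 : (A : ℤ) + 1 = ((A + 1 : ℕ) : ℤ) := by push_cast; ring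
    have h2 : (B : ℤ) + 1 = ((B + 1 : ℕ) : ℤ) := by push_cast; ring
    have h3 : (B : ℤ) + 1 - 1 = ((B : ℕ) : ℤ) := by push_cast; ring
    rw [h2] at *; rw [h1, C_nat, C_nat]
    rw [show (((B+1:ℕ):ℤ)) - 1 = ((B:ℕ):ℤ) by push_cast; ring]
    rw [C_nat, Nat.choose_succ_succ]
    push_cast; ring

lemma C_symm (a b : ℤ) (ha : 0 ≤ a) : C a b = C a (a - b) := by
  rcases lt_trichotomy b 0 with hb | hb | hb
  · rw [C_neg hb, C_gt (by omega)]
  · subst hb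
    rw [sub_zero]
    unfold C
    rw [if_pos ⟨le_refl 0, ha⟩, if_pos ⟨ha, le_refl a⟩]
    simp [Nat.choose_self]
  · rcases le_or_gt b a with hba | hba
    · obtain ⟨A, rfl⟩ : ∃ A : ℕ, a = (A : ℤ) := ⟨a.toNat, (Int.toNat_of_nonneg ha).symm⟩
      obtain ⟨B, rfl⟩ : ∃ B : ℕ, b = (B : ℤ) := ⟨b.toNat, (Int.toNat_of_nonneg (by omega)).symm⟩
      have h3 : (A : ℤ) - B = ((A - B : ℕ) : ℤ) := by omega
      rw [h3, C_nat, C_nat, Nat.choose_symm (by exact_mod_cast hba)]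
    · rw [C_gt hba, C_neg (by omega)]

lemma C_self (a : ℤ) (ha : 0 ≤ a) : C a a = 1 := by
  obtain ⟨A, rfl⟩ : ∃ A : ℕ, a = (A : ℤ) := ⟨a.toNat, (Int.toNat_of_nonneg ha).symm⟩
  rw [C_nat, Nat.choose_self]; norm_num

lemma C_zero (a : ℤ) (ha : 0 ≤ a) : C a 0 = 1 := by
  obtain ⟨A, rfl⟩ : ∃ A : ℕ, a = (A : ℤ) := ⟨a.toNat, (Int.toNat_of_nonneg ha).symm⟩
  rw [show (0:ℤ) = ((0:ℕ):ℤ) by norm_num, C_nat, Nat.choose_zero_right]; norm_num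

lemma Tlem (a s : ℕ) :
    ∑ l ∈ range (s + 1), (-1 : ℤ) ^ l * C ((a : ℤ) + l) l * C (a : ℤ) ((s : ℤ) - l)
      = (-1 : ℤ) ^ s := by
  induction a generalizing s with
  | zero =>
    rw [Finset.sum_eq_single s]
    · rw [show ((0:ℕ):ℤ) + (s:ℤ) = ((s:ℤ)) by push_cast; ring, C_self _ (by positivity),
        show ((s:ℤ) - (s:ℤ)) = 0 by ring, C_zero _ (by norm_num)]
      ring
    · intro l hl hne
      rcases lt_or_gt_of_ne hne with h | h
      · rw [C_gt (show ((0:ℕ):ℤ) < (s:ℤ) - l by push_cast; omega)]; ring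
      · rw [C_neg (show (s:ℤ) - l < 0 by push_cast; omega)]; ring
    · intro h; exact absurd (self_mem_range_succ s) h
  | succ a ih =>
    induction s with
    | zero =>
      rw [Finset.sum_range_one]
      rw [show ((a+1:ℕ):ℤ) + ((0:ℕ):ℤ) = ((a+1:ℕ):ℤ) by push_cast; ring,
        show (((0:ℕ):ℤ) - ((0:ℕ):ℤ)) = 0 by norm_num,
        show ((0:ℕ):ℤ) = (0:ℤ) by norm_num,
        C_zero _ (by positivity)]
      ring
    | succ s ihs =>
      have h1 : ∀ l ∈ range (s + 1 + 1),
          (-1 : ℤ) ^ l * C (((a+1:ℕ):ℤ) + l) l * C ((a+1:ℕ):ℤ) (((s+1:ℕ):ℤ) - l)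
          = ((-1 : ℤ) ^ l * C ((a:ℤ) + l) l * C (a:ℤ) (((s+1:ℕ):ℤ) - l)
            + (-1 : ℤ) ^ l * C ((a:ℤ) + l) l * C (a:ℤ) ((s:ℤ) - l))
            + (-1 : ℤ) ^ l * C ((a:ℤ) + l) ((l:ℤ) - 1) * C ((a+1:ℕ):ℤ) (((s+1:ℕ):ℤ) - l) := by
        intro l _
        rw [show (((a+1:ℕ):ℤ) + l) = ((a:ℤ) + l) + 1 by push_cast; ring,
          C_pascal _ _ (by positivity),
          show ((a+1:ℕ):ℤ) = (a:ℤ) + 1 by push_cast; ring,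
          C_pascal (a:ℤ) (((s+1:ℕ):ℤ) - l) (by positivity),
          show (((s+1:ℕ):ℤ) - l - 1) = (s:ℤ) - l by push_cast; ring]
        ring
      rw [Finset.sum_congr rfl h1, Finset.sum_add_distrib, Finset.sum_add_distrib]
      -- S_A
      have hA : ∑ l ∈ range (s + 1 + 1),
          (-1 : ℤ) ^ l * C ((a:ℤ) + l) l * C (a:ℤ) (((s+1:ℕ):ℤ) - l) = (-1:ℤ)^(s+1) := by
        have := ih (s+1)
        simpa using this
      -- S_B
      have hB : ∑ l ∈ range (s + 1 + 1),
          (-1 : ℤ) ^ l * C ((a:ℤ) + l) l * C (a:ℤ) ((s:ℤ) - l) = (-1:ℤ)^s := by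
        rw [Finset.sum_range_succ, C_neg (show (s:ℤ) - ((s+1:ℕ):ℤ) < 0 by push_cast; omega)]
        rw [ih s]; ring
      -- S_C
      have hC : ∑ l ∈ range (s + 1 + 1),
          (-1 : ℤ) ^ l * C ((a:ℤ) + l) ((l:ℤ) - 1) * C ((a+1:ℕ):ℤ) (((s+1:ℕ):ℤ) - l)
          = -(-1:ℤ)^s := by
        rw [Finset.sum_range_succ']
        rw [show ((a:ℤ) + ((0:ℕ):ℤ)) = (a:ℤ) by push_cast; ring]
        rw [C_neg (show ((0:ℕ):ℤ) - 1 < 0 by norm_num)]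
        have h2 : ∀ l ∈ range (s + 1),
            (-1 : ℤ) ^ (l+1) * C ((a:ℤ) + ((l+1:ℕ):ℤ)) (((l+1:ℕ):ℤ) - 1) * C ((a+1:ℕ):ℤ) (((s+1:ℕ):ℤ) - ((l+1:ℕ):ℤ))
            = -((-1 : ℤ) ^ l * C (((a+1:ℕ):ℤ) + l) l * C ((a+1:ℕ):ℤ) ((s:ℤ) - l)) := by
          intro l _
          rw [show ((a:ℤ) + ((l+1:ℕ):ℤ)) = ((a+1:ℕ):ℤ) + l by push_cast; ring,
            show (((l+1:ℕ):ℤ) - 1) = (l:ℤ) by push_cast; ring,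
            show (((s+1:ℕ):ℤ) - ((l+1:ℕ):ℤ)) = (s:ℤ) - l by push_cast; ring]
          ring
        rw [Finset.sum_congr rfl h2, Finset.sum_neg_distrib]
        rw [ihs]; ring
      rw [hA, hB, hC]; ring

lemma hs (β k : ℕ) : ∑ v ∈ range (k+1), (β+v).choose v = (β+k+1).choose k := by
  induction k with
  | zero => simp
  | succ k ih =>
    rw [Finset.sum_range_succ, ih]
    have h1 : (β + (k+1) + 1) = (β + k + 1) + 1 := by ring
    rw [h1, Nat.choose_succ_succ]
    rfl

lemma L4 (α β k : ℕ) :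
    ∑ u ∈ range (k+1), (α+u).choose u * (β+(k-u)).choose (k-u) = (α+β+k+1).choose k := by
  induction α generalizing k with
  | zero =>
    rw [← Finset.sum_range_reflect]
    simp only [Nat.add_sub_cancel]
    have h : ∀ u ∈ range (k+1), (0+(k-u)).choose (k-u) * (β+(k-(k-u))).choose (k-(k-u))
        = (β+u).choose u := by
      intro u hu
      have hu' : u ≤ k := by have := mem_range.mp hu; omega
      have h1 : k - (k - u) = u := by omega
      rw [h1, Nat.zero_add, Nat.choose_self, one_mul]
    rw [Finset.sum_congr rfl h, hs]
    congr 1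
    omega
  | succ α ih =>
    induction k with
    | zero => simp
    | succ k ihk =>
      rw [Finset.sum_range_succ']
      have h : ∀ u ∈ range (k+1),
          (α+1+(u+1)).choose (u+1) * (β+(k+1-(u+1))).choose (k+1-(u+1))
          = (α+(u+1)).choose (u+1) * (β+(k+1-(u+1))).choose (k+1-(u+1))
            + (α+1+u).choose u * (β+(k-u)).choose (k-u) := by
        intro u hu
        have h1 : α+1+(u+1) = (α+(u+1)) + 1 := by ring
        rw [h1, Nat.choose_succ_succ]
        simp only [Nat.succ_sub_succ, Nat.succ_eq_add_one, show α+(u+1) = α+1+u by ring]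
        ring
      rw [Finset.sum_congr rfl h, Finset.sum_add_distrib, ihk]
      -- remaining: ∑_{u<k+1} (α+(u+1)).choose (u+1) * ... + first term
      -- LHS now: (∑ (α+(u+1))...) + (α+β+k+2).choose k + (α+1+0).choose 0 * (β+(k+1-0)).choose (k+1-0)
      have e1 : ∑ x ∈ range (k+1), (α+(x+1)).choose (x+1) * (β+(k+1-(x+1))).choose (k+1-(x+1))
          + (α+0).choose 0 * (β+(k+1-0)).choose (k+1-0) = (α+β+(k+1)+1).choose (k+1) := by
        rw [← ih (k+1)]
        conv_rhs => rw [Finset.sum_range_succ']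
      have e2 : (α+β+k+2+1).choose (k+1) = (α+β+k+2).choose k + (α+β+k+2).choose (k+1) :=
        Nat.choose_succ_succ _ _
      rw [show α+1+β+k+1 = α+β+k+2 by ring, show α+1+β+(k+1)+1 = α+β+k+2+1 by ring]
      rw [show α+β+(k+1)+1 = α+β+k+2 by ring] at e1
      simp only [Nat.add_zero, Nat.sub_zero, Nat.choose_zero_right, one_mul] at e1 ⊢
      omega

/-- the main sum -/
def S (m n k r : ℕ) : ℤ :=
  ∑ l ∈ range (k + 1),
    (-1 : ℤ) ^ l * C ((m : ℤ) - l) ((k : ℤ) - l) * C ((n : ℤ) - k + l) (l : ℤ)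
      * C ((m : ℤ) + n - 2 * k) ((m : ℤ) - r - l)

lemma caseA (m n : ℕ) : S m n 0 0 = (-1:ℤ)^(0-0:ℕ) * C ((m:ℤ) + n - 2*0) ((m:ℤ) - 0) := by
  unfold S
  rw [Finset.sum_range_one]
  push_cast
  rw [show ((n:ℤ) - 0 + 0) = (n:ℤ) by ring,
      show ((m:ℤ) + n - 0) = (m:ℤ) + (n:ℤ) by ring,
      show ((m:ℤ) - 0) = (m:ℤ) by ring,
      C_zero (m:ℤ) (by positivity), C_zero (n:ℤ) (by positivity)]
  ring

lemma caseB (n k r : ℕ) (hkn : k ≤ n) (hrk : r ≤ k) :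
    S k n k r = (-1:ℤ)^(k-r) * C ((k:ℤ) + n - 2*k) ((k:ℤ) - k) := by
  unfold S
  have h1 : ∀ l ∈ range (k+1),
      (-1 : ℤ) ^ l * C ((k : ℤ) - l) ((k : ℤ) - l) * C ((n : ℤ) - k + l) (l : ℤ)
        * C ((k : ℤ) + n - 2 * k) ((k : ℤ) - r - l)
      = (-1 : ℤ) ^ l * C (((n-k:ℕ) : ℤ) + l) (l:ℤ) * C ((n-k:ℕ) : ℤ) (((k-r:ℕ) : ℤ) - l) := by
    intro l hl
    have hl' : l < k + 1 := mem_range.mp hl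
    rw [C_self _ (by omega),
        show ((n : ℤ) - k + l) = ((n-k:ℕ):ℤ) + l by omega,
        show ((k : ℤ) + n - 2*k) = ((n-k:ℕ):ℤ) by omega,
        show ((k : ℤ) - r - l) = ((k-r:ℕ):ℤ) - l by omega]
    ring
  rw [Finset.sum_congr rfl h1]
  rw [← Finset.sum_subset (Finset.range_subset_range.mpr (show k-r+1 ≤ k+1 by omega))
      (by
        intro l hl hnl
        have h2 : k - r + 1 ≤ l := by
          by_contra hc
          exact hnl (mem_range.mpr (by omega))
        have h3 : l < k + 1 := mem_range.mp hl
        rw [C_neg (show (((k-r:ℕ):ℤ) - l) < 0 by omega)]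
        ring)]
  rw [Tlem (n-k) (k-r)]
  rw [show ((k : ℤ) + n - 2*k) = ((n-k:ℕ):ℤ) by omega,
      show ((k : ℤ) - k) = 0 by ring, C_zero _ (by positivity)]
  ring

lemma caseC (m k r : ℕ) (hkm : k ≤ m) (hrk : r ≤ k) :
    S m k k r = (-1:ℤ)^(k-r) * C ((m:ℤ) + k - 2*k) ((m:ℤ) - k) := by
  unfold S
  rw [← Finset.sum_range_reflect]
  simp only [Nat.add_sub_cancel]
  have h1 : ∀ j ∈ range (k+1),
      (-1 : ℤ) ^ (k-j) * C ((m : ℤ) - (k-j:ℕ)) ((k : ℤ) - (k-j:ℕ)) * C ((k : ℤ) - k + (k-j:ℕ)) ((k-j:ℕ) : ℤ)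
        * C ((m : ℤ) + k - 2 * k) ((m : ℤ) - r - (k-j:ℕ))
      = (-1:ℤ)^k * ((-1 : ℤ) ^ j * C (((m-k:ℕ) : ℤ) + j) (j:ℤ) * C ((m-k:ℕ) : ℤ) ((r : ℤ) - j)) := by
    intro j hj
    have hj' : j < k + 1 := mem_range.mp hj
    have e1 : ((k : ℤ) - k + ((k-j:ℕ):ℤ)) = ((k-j:ℕ):ℤ) := by omega
    rw [e1, C_self _ (by omega)]
    rw [show ((m : ℤ) - ((k-j:ℕ):ℤ)) = ((m-k:ℕ):ℤ) + j by omega,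
        show ((k : ℤ) - ((k-j:ℕ):ℤ)) = (j:ℤ) by omega,
        show ((m : ℤ) + k - 2*k) = ((m-k:ℕ):ℤ) by omega]
    rw [C_symm ((m-k:ℕ):ℤ) ((m:ℤ) - r - ((k-j:ℕ):ℤ)) (by positivity),
        show (((m-k:ℕ):ℤ) - ((m:ℤ) - r - ((k-j:ℕ):ℤ))) = (r:ℤ) - j by omega]
    have e2 : (-1:ℤ)^(k-j) * (-1:ℤ)^j = (-1:ℤ)^k := by
      rw [← pow_add, show k-j+j = k by omega]
    have e3 : (-1:ℤ)^(k-j) = (-1:ℤ)^k * (-1:ℤ)^j := by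
      have h4 : ((-1:ℤ)^j)*((-1:ℤ)^j) = 1 := by
        rw [← pow_add, ← two_mul, pow_mul]; norm_num
      calc (-1:ℤ)^(k-j) = (-1:ℤ)^(k-j) * (((-1:ℤ)^j)*((-1:ℤ)^j)) := by rw [h4]; ring
        _ = ((-1:ℤ)^(k-j) * (-1:ℤ)^j) * (-1:ℤ)^j := by ring
        _ = (-1:ℤ)^k * (-1:ℤ)^j := by rw [e2]
    rw [e3]
    ring
  rw [Finset.sum_congr rfl h1, ← Finset.mul_sum]
  rw [← Finset.sum_subset (Finset.range_subset_range.mpr (show r+1 ≤ k+1 by omega))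
      (by
        intro j hj hnj
        have h2 : r + 1 ≤ j := by
          by_contra hc
          exact hnj (mem_range.mpr (by omega))
        rw [C_neg (show ((r:ℤ) - j) < 0 by omega)]
        ring)]
  rw [Tlem (m-k) r]
  rw [show ((m : ℤ) + k - 2*k) = ((m-k:ℕ):ℤ) by omega,
      show ((m : ℤ) - k) = ((m-k:ℕ):ℤ) by omega, C_self _ (by positivity)]
  rw [show (-1:ℤ)^k * (-1:ℤ)^r = (-1:ℤ)^(k+r) by rw [pow_add],
      show k + r = (k-r) + 2*r by omega, pow_add, pow_mul]
  norm_num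

lemma KeyB : ∀ (t m n k r : ℕ), m + n ≤ t → k ≤ m → k ≤ n → r ≤ k →
    S m n k r = (-1:ℤ)^(k-r) * C ((m:ℤ) + n - 2*k) ((m:ℤ) - k) := by
  intro t
  induction t with
  | zero =>
    intro m n k r hmn hkm hkn hrk
    obtain rfl : m = 0 := by omega
    obtain rfl : n = 0 := by omega
    obtain rfl : k = 0 := by omega
    obtain rfl : r = 0 := by omega
    exact caseA 0 0
  | succ t ih =>
    intro m n k r hmn hkm hkn hrk
    rcases Nat.eq_zero_or_pos k with rfl | hk
    · obtain rfl : r = 0 := by omega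
      exact caseA m n
    rcases eq_or_lt_of_le hkm with rfl | hm
    · exact caseB n k r hkn hrk
    rcases eq_or_lt_of_le hkn with rfl | hn
    · exact caseC m k r hkm hrk
    rcases Nat.eq_zero_or_pos r with rfl | hr
    · -- r = 0
      obtain ⟨k', rfl⟩ : ∃ k', k = k' + 1 := ⟨k - 1, by omega⟩
      unfold S
      have h1 : ∀ l ∈ range (k' + 1 + 1),
          (-1 : ℤ) ^ l * C ((m : ℤ) - l) (((k'+1:ℕ) : ℤ) - l) * C ((n : ℤ) - (k'+1:ℕ) + l) (l : ℤ)
            * C ((m : ℤ) + n - 2 * (k'+1:ℕ)) ((m : ℤ) - ((0:ℕ):ℤ) - l)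
          = ((-1 : ℤ) ^ l * C ((m : ℤ) - l) (((k'+1:ℕ) : ℤ) - l) * C (((n-1:ℕ) : ℤ) - (k'+1:ℕ) + l) (l : ℤ)
            * C ((m : ℤ) + n - 2 * (k'+1:ℕ)) ((m : ℤ) - ((0:ℕ):ℤ) - l))
          + ((-1 : ℤ) ^ l * C ((m : ℤ) - l) (((k'+1:ℕ) : ℤ) - l) * C (((n-1:ℕ) : ℤ) - (k'+1:ℕ) + l) ((l : ℤ) - 1)
            * C ((m : ℤ) + n - 2 * (k'+1:ℕ)) ((m : ℤ) - ((0:ℕ):ℤ) - l)) := by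
        intro l hl
        have hl' : l < k' + 1 + 1 := mem_range.mp hl
        rw [show ((n : ℤ) - (k'+1:ℕ) + l) = (((n-1:ℕ) : ℤ) - (k'+1:ℕ) + l) + 1 by omega,
            C_pascal _ _ (by omega)]
        ring
      rw [Finset.sum_congr rfl h1, Finset.sum_add_distrib]
      -- first part : pascal on last factor
      have h2 : ∀ l ∈ range (k' + 1 + 1),
          (-1 : ℤ) ^ l * C ((m : ℤ) - l) (((k'+1:ℕ) : ℤ) - l) * C (((n-1:ℕ) : ℤ) - (k'+1:ℕ) + l) (l : ℤ)
            * C ((m : ℤ) + n - 2 * (k'+1:ℕ)) ((m : ℤ) - ((0:ℕ):ℤ) - l)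
          = ((-1 : ℤ) ^ l * C ((m : ℤ) - l) (((k'+1:ℕ) : ℤ) - l) * C (((n-1:ℕ) : ℤ) - (k'+1:ℕ) + l) (l : ℤ)
            * C ((m : ℤ) + (n-1:ℕ) - 2 * (k'+1:ℕ)) ((m : ℤ) - ((0:ℕ):ℤ) - l))
          + ((-1 : ℤ) ^ l * C ((m : ℤ) - l) (((k'+1:ℕ) : ℤ) - l) * C (((n-1:ℕ) : ℤ) - (k'+1:ℕ) + l) (l : ℤ)
            * C ((m : ℤ) + (n-1:ℕ) - 2 * (k'+1:ℕ)) ((m : ℤ) - ((1:ℕ):ℤ) - l)) := by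
        intro l hl
        have hl' : l < k' + 1 + 1 := mem_range.mp hl
        rw [show ((m : ℤ) + n - 2 * (k'+1:ℕ)) = ((m : ℤ) + (n-1:ℕ) - 2 * (k'+1:ℕ)) + 1 by omega,
            C_pascal _ _ (by omega),
            show ((m : ℤ) - ((0:ℕ):ℤ) - l - 1) = ((m : ℤ) - ((1:ℕ):ℤ) - l) by push_cast; ring]
        ring
      rw [Finset.sum_congr rfl h2, Finset.sum_add_distrib]
      have I4 := ih m (n-1) (k'+1) 0 (by omega) (by omega) (by omega) (by omega)
      have I5 := ih m (n-1) (k'+1) 1 (by omega) (by omega) (by omega) (by omega)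
      unfold S at I4 I5
      rw [I4, I5]
      -- second part : shift index
      rw [Finset.sum_range_succ']
      have h3 : ∀ l ∈ range (k' + 1),
          (-1 : ℤ) ^ (l+1) * C ((m : ℤ) - (l+1:ℕ)) (((k'+1:ℕ) : ℤ) - (l+1:ℕ)) * C (((n-1:ℕ) : ℤ) - (k'+1:ℕ) + (l+1:ℕ)) (((l+1:ℕ) : ℤ) - 1)
            * C ((m : ℤ) + n - 2 * (k'+1:ℕ)) ((m : ℤ) - ((0:ℕ):ℤ) - (l+1:ℕ))
          = -((-1 : ℤ) ^ l * C (((m-1:ℕ) : ℤ) - l) ((k' : ℤ) - l) * C (((n-1:ℕ) : ℤ) - k' + l) (l : ℤ)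
            * C (((m-1:ℕ) : ℤ) + (n-1:ℕ) - 2 * k') (((m-1:ℕ) : ℤ) - ((0:ℕ):ℤ) - l)) := by
        intro l hl
        have hl' : l < k' + 1 := mem_range.mp hl
        rw [show ((m : ℤ) - ((l+1:ℕ):ℤ)) = ((m-1:ℕ) : ℤ) - l by omega,
            show (((k'+1:ℕ) : ℤ) - ((l+1:ℕ):ℤ)) = (k' : ℤ) - l by omega,
            show (((n-1:ℕ) : ℤ) - ((k'+1:ℕ):ℤ) + ((l+1:ℕ):ℤ)) = ((n-1:ℕ) : ℤ) - k' + l by omega,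
            show (((l+1:ℕ) : ℤ) - 1) = (l : ℤ) by omega,
            show ((m : ℤ) + n - 2 * ((k'+1:ℕ):ℤ)) = ((m-1:ℕ) : ℤ) + (n-1:ℕ) - 2 * k' by omega,
            show ((m : ℤ) - ((0:ℕ):ℤ) - ((l+1:ℕ):ℤ)) = ((m-1:ℕ) : ℤ) - ((0:ℕ):ℤ) - l by omega,
            pow_succ]
        ring
      rw [Finset.sum_congr rfl h3]
      have I6 := ih (m-1) (n-1) k' 0 (by omega) (by omega) (by omega) (by omega)
      unfold S at I6
      rw [Finset.sum_neg_distrib, I6]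
      -- the l = 0 leftover term
      rw [show (((0:ℕ):ℤ) - 1 : ℤ) = -1 by norm_num]
      rw [C_neg (show (-1 : ℤ) < 0 by norm_num)]
      -- final arithmetic
      rw [show ((m-1:ℕ) : ℤ) + ((n-1:ℕ):ℤ) - 2 * (k' : ℤ) = (m : ℤ) + n - 2 * ((k'+1:ℕ):ℤ) by omega,
          show ((m-1:ℕ) : ℤ) - (k' : ℤ) = (m : ℤ) - ((k'+1:ℕ):ℤ) by omega]
      rw [show (k'+1) - 0 = k' + 1 by omega, show (k'+1) - 1 = k' by omega, show k' - 0 = k' by omega]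
      rw [pow_succ]
      ring
    · -- r ≥ 1
      obtain ⟨r', rfl⟩ : ∃ r', r = r' + 1 := ⟨r - 1, by omega⟩
      unfold S
      have h1 : ∀ l ∈ range (k + 1),
          (-1 : ℤ) ^ l * C ((m : ℤ) - l) ((k : ℤ) - l) * C ((n : ℤ) - k + l) (l : ℤ)
            * C ((m : ℤ) + n - 2 * k) ((m : ℤ) - ((r'+1:ℕ):ℤ) - l)
          = ((-1 : ℤ) ^ l * C (((m-1:ℕ) : ℤ) - l) ((k : ℤ) - l) * C ((n : ℤ) - k + l) (l : ℤ)
            * C ((m : ℤ) + n - 2 * k) ((m : ℤ) - ((r'+1:ℕ):ℤ) - l))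
          + ((-1 : ℤ) ^ l * C (((m-1:ℕ) : ℤ) - l) ((k : ℤ) - l - 1) * C ((n : ℤ) - k + l) (l : ℤ)
            * C ((m : ℤ) + n - 2 * k) ((m : ℤ) - ((r'+1:ℕ):ℤ) - l)) := by
        intro l hl
        have hl' : l < k + 1 := mem_range.mp hl
        rw [show ((m : ℤ) - l) = (((m-1:ℕ) : ℤ) - l) + 1 by omega, C_pascal _ _ (by omega)]
        ring
      rw [Finset.sum_congr rfl h1, Finset.sum_add_distrib]
      have h2 : ∀ l ∈ range (k + 1),
          (-1 : ℤ) ^ l * C (((m-1:ℕ) : ℤ) - l) ((k : ℤ) - l) * C ((n : ℤ) - k + l) (l : ℤ)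
            * C ((m : ℤ) + n - 2 * k) ((m : ℤ) - ((r'+1:ℕ):ℤ) - l)
          = ((-1 : ℤ) ^ l * C (((m-1:ℕ) : ℤ) - l) ((k : ℤ) - l) * C ((n : ℤ) - k + l) (l : ℤ)
            * C (((m-1:ℕ) : ℤ) + n - 2 * k) (((m-1:ℕ) : ℤ) - ((r':ℕ):ℤ) - l))
          + ((-1 : ℤ) ^ l * C (((m-1:ℕ) : ℤ) - l) ((k : ℤ) - l) * C ((n : ℤ) - k + l) (l : ℤ)
            * C (((m-1:ℕ) : ℤ) + n - 2 * k) (((m-1:ℕ) : ℤ) - ((r'+1:ℕ):ℤ) - l)) := by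
        intro l hl
        have hl' : l < k + 1 := mem_range.mp hl
        rw [show ((m : ℤ) + n - 2 * k) = (((m-1:ℕ) : ℤ) + n - 2 * k) + 1 by omega,
            C_pascal _ _ (by omega),
            show ((m : ℤ) - ((r'+1:ℕ):ℤ) - l) = (((m-1:ℕ) : ℤ) - ((r':ℕ):ℤ) - l) by omega,
            show ((((m-1:ℕ) : ℤ) - ((r':ℕ):ℤ) - l) - 1) = (((m-1:ℕ) : ℤ) - ((r'+1:ℕ):ℤ) - l) by omega]
        ring
      rw [Finset.sum_congr rfl h2, Finset.sum_add_distrib]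
      have I1 := ih (m-1) n k r' (by omega) (by omega) (by omega) (by omega)
      have I2 := ih (m-1) n k (r'+1) (by omega) (by omega) (by omega) (by omega)
      unfold S at I1 I2
      rw [I1, I2]
      -- second part : drop l = k
      rw [Finset.sum_range_succ]
      rw [C_neg (show ((k : ℤ) - (k:ℕ) - 1 : ℤ) < 0 by omega)]
      have h3 : ∀ l ∈ range k,
          (-1 : ℤ) ^ l * C (((m-1:ℕ) : ℤ) - l) ((k : ℤ) - l - 1) * C ((n : ℤ) - k + l) (l : ℤ)
            * C ((m : ℤ) + n - 2 * k) ((m : ℤ) - ((r'+1:ℕ):ℤ) - l)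
          = (-1 : ℤ) ^ l * C (((m-1:ℕ) : ℤ) - l) (((k-1:ℕ) : ℤ) - l) * C (((n-1:ℕ) : ℤ) - (k-1:ℕ) + l) (l : ℤ)
            * C (((m-1:ℕ) : ℤ) + (n-1:ℕ) - 2 * (k-1:ℕ)) (((m-1:ℕ) : ℤ) - ((r':ℕ):ℤ) - l) := by
        intro l hl
        have hl' : l < k := mem_range.mp hl
        rw [show ((k : ℤ) - l - 1) = ((k-1:ℕ) : ℤ) - l by omega,
            show ((n : ℤ) - k + l) = ((n-1:ℕ) : ℤ) - ((k-1:ℕ):ℤ) + l by omega,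
            show ((m : ℤ) + n - 2 * k) = ((m-1:ℕ) : ℤ) + ((n-1:ℕ):ℤ) - 2 * ((k-1:ℕ):ℤ) by omega,
            show ((m : ℤ) - ((r'+1:ℕ):ℤ) - l) = ((m-1:ℕ) : ℤ) - ((r':ℕ):ℤ) - l by omega]
      rw [Finset.sum_congr rfl h3]
      have I3 := ih (m-1) (n-1) (k-1) r' (by omega) (by omega) (by omega) (by omega)
      unfold S at I3
      rw [show (k-1) + 1 = k by omega] at I3
      rw [I3]
      -- final arithmetic
      rw [show ((m-1:ℕ) : ℤ) + ((n-1:ℕ):ℤ) - 2 * ((k-1:ℕ) : ℤ) = (m : ℤ) + n - 2 * (k:ℤ) by omega,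
          show ((m-1:ℕ) : ℤ) - ((k-1:ℕ) : ℤ) = (m : ℤ) - (k:ℤ) by omega,
          show (k-1) - r' = k - (r'+1) by omega,
          show k - r' = (k - (r'+1)) + 1 by omega,
          pow_succ]
      have harg : ((m-1:ℕ) : ℤ) + (n:ℤ) - 2 * (k:ℤ) = ((m-1:ℕ) : ℤ) + (n:ℤ) - 2 * (k:ℤ) := rfl
      ring

/-- Off-diagonal vanishing -/
lemma Vanish : ∀ (e m n k r : ℕ), k ≤ m → k ≤ n → r + e + 1 ≤ k →
    ∑ l ∈ range (k + 1),
      (-1 : ℤ) ^ l * C ((m : ℤ) - l) ((k : ℤ) - l) * C ((n : ℤ) - k + l) (l : ℤ)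
        * C ((m : ℤ) + n - 2 * k + ((e+1:ℕ):ℤ)) ((m : ℤ) - r - l) = 0 := by
  intro e
  induction e with
  | zero =>
    intro m n k r hkm hkn hrk
    have h1 : ∀ l ∈ range (k + 1),
        (-1 : ℤ) ^ l * C ((m : ℤ) - l) ((k : ℤ) - l) * C ((n : ℤ) - k + l) (l : ℤ)
          * C ((m : ℤ) + n - 2 * k + ((0+1:ℕ):ℤ)) ((m : ℤ) - r - l)
        = ((-1 : ℤ) ^ l * C ((m : ℤ) - l) ((k : ℤ) - l) * C ((n : ℤ) - k + l) (l : ℤ)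
          * C ((m : ℤ) + n - 2 * k) ((m : ℤ) - r - l))
        + ((-1 : ℤ) ^ l * C ((m : ℤ) - l) ((k : ℤ) - l) * C ((n : ℤ) - k + l) (l : ℤ)
          * C ((m : ℤ) + n - 2 * k) ((m : ℤ) - ((r+1:ℕ):ℤ) - l)) := by
      intro l hl
      rw [show ((m : ℤ) + n - 2 * k + ((0+1:ℕ):ℤ)) = ((m : ℤ) + n - 2 * k) + 1 by push_cast; ring,
          C_pascal _ _ (by omega),
          show ((m : ℤ) - r - l - 1) = ((m : ℤ) - ((r+1:ℕ):ℤ) - l) by push_cast; ring]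
      ring
    rw [Finset.sum_congr rfl h1, Finset.sum_add_distrib]
    have I1 := KeyB (m+n) m n k r le_rfl hkm hkn (by omega)
    have I2 := KeyB (m+n) m n k (r+1) le_rfl hkm hkn (by omega)
    unfold S at I1 I2
    rw [I1, I2, show k - r = (k - (r+1)) + 1 by omega, pow_succ]
    ring
  | succ e ihe =>
    intro m n k r hkm hkn hrk
    have h1 : ∀ l ∈ range (k + 1),
        (-1 : ℤ) ^ l * C ((m : ℤ) - l) ((k : ℤ) - l) * C ((n : ℤ) - k + l) (l : ℤ)
          * C ((m : ℤ) + n - 2 * k + ((e+1+1:ℕ):ℤ)) ((m : ℤ) - r - l)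
        = ((-1 : ℤ) ^ l * C ((m : ℤ) - l) ((k : ℤ) - l) * C ((n : ℤ) - k + l) (l : ℤ)
          * C ((m : ℤ) + n - 2 * k + ((e+1:ℕ):ℤ)) ((m : ℤ) - r - l))
        + ((-1 : ℤ) ^ l * C ((m : ℤ) - l) ((k : ℤ) - l) * C ((n : ℤ) - k + l) (l : ℤ)
          * C ((m : ℤ) + n - 2 * k + ((e+1:ℕ):ℤ)) ((m : ℤ) - ((r+1:ℕ):ℤ) - l)) := by
      intro l hl
      rw [show ((m : ℤ) + n - 2 * k + ((e+1+1:ℕ):ℤ)) = ((m : ℤ) + n - 2 * k + ((e+1:ℕ):ℤ)) + 1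
            by push_cast; ring,
          C_pascal _ _ (by omega),
          show ((m : ℤ) - r - l - 1) = ((m : ℤ) - ((r+1:ℕ):ℤ) - l) by push_cast; ring]
      ring
    rw [Finset.sum_congr rfl h1, Finset.sum_add_distrib,
        ihe m n k r hkm hkn (by omega), ihe m n k (r+1) hkm hkn (by omega)]
    ring

/-- Vandermonde over an integer interval -/
lemma vand (M : ℕ) (a b L cc : ℤ) (ha : 0 ≤ a) (hb : 0 ≤ b) (hL : 0 ≤ L) (hcc : cc ≤ (M:ℤ)) :
    ∑ i ∈ Finset.Icc (0:ℤ) (M:ℤ), C a (i - L) * C b (cc - i) = C (a+b) (cc - L) := by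
  rcases lt_or_ge cc L with h | h
  · rw [C_neg (show cc - L < 0 by omega)]
    apply Finset.sum_eq_zero
    intro i hi
    rcases lt_or_ge i L with h2 | h2
    · rw [C_neg (show i - L < 0 by omega)]; ring
    · rw [C_neg (show cc - i < 0 by omega)]; ring
  · obtain ⟨A, rfl⟩ : ∃ A : ℕ, a = (A : ℤ) := ⟨a.toNat, (Int.toNat_of_nonneg ha).symm⟩
    obtain ⟨B, rfl⟩ : ∃ B : ℕ, b = (B : ℤ) := ⟨b.toNat, (Int.toNat_of_nonneg hb).symm⟩
    obtain ⟨E, hE⟩ : ∃ E : ℕ, cc - L = (E : ℤ) := ⟨(cc - L).toNat, (Int.toNat_of_nonneg (by omega)).symm⟩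
    rw [← Finset.sum_subset (Finset.Icc_subset_Icc (by omega) (by omega) :
          Finset.Icc L cc ⊆ Finset.Icc (0:ℤ) (M:ℤ))
        (by
          intro i hi hni
          have hi' := Finset.mem_Icc.mp hi
          have hni' : i < L ∨ cc < i := by
            rcases lt_or_ge i L with h2 | h2
            · exact Or.inl h2
            rcases le_or_gt i cc with h3 | h3
            · exact absurd (Finset.mem_Icc.mpr ⟨h2, h3⟩) hni
            · exact Or.inr h3
          rcases hni' with h2 | h2
          · rw [C_neg (show i - L < 0 by omega)]; ring
          · rw [C_neg (show cc - i < 0 by omega)]; ring)]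
    have hbij : ∑ i ∈ Finset.Icc L cc, C (A:ℤ) (i - L) * C (B:ℤ) (cc - i)
        = ∑ j ∈ range (E+1), ((A.choose j : ℤ) * (B.choose (E - j) : ℤ)) := by
      apply Finset.sum_nbij' (fun i => (i - L).toNat) (fun j => L + (j:ℤ))
      · intro i hi
        have := Finset.mem_Icc.mp hi
        exact mem_range.mpr (by omega)
      · intro j hj
        have := mem_range.mp hj
        exact Finset.mem_Icc.mpr (by omega)
      · intro i hi; have := Finset.mem_Icc.mp hi; omega
      · intro j hj; have := mem_range.mp hj; omega
      · intro i hi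
        have hi' := Finset.mem_Icc.mp hi
        rw [show (i - L) = (((i-L).toNat : ℕ) : ℤ) by omega,
            show (cc - i) = ((E - (i-L).toNat : ℕ) : ℤ) by omega,
            C_nat, C_nat, Int.toNat_natCast]
    rw [hbij]
    rw [show ((A:ℤ) + B) = ((A+B:ℕ):ℤ) by push_cast; ring, hE, C_nat]
    rw [Nat.add_choose_eq, Finset.Nat.sum_antidiagonal_eq_sum_range_succ_mk]
    push_cast
    rfl

lemma L4C (m n k : ℕ) (hkm : k ≤ m) (hkn : k ≤ n) :
    ∑ r ∈ range (k+1), C ((m:ℤ)-r) ((k:ℤ)-r) * C ((n:ℤ)-k+r) (r:ℤ)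
      = C ((m:ℤ)+n-k+1) (k:ℤ) := by
  have h1 : ∀ r ∈ range (k+1),
      C ((m:ℤ)-r) ((k:ℤ)-r) * C ((n:ℤ)-k+r) (r:ℤ)
      = ((((n-k)+r:ℕ).choose r : ℤ)) * ((((m-k)+(k-r):ℕ).choose (k-r) : ℤ)) := by
    intro r hr
    have hr' : r < k + 1 := mem_range.mp hr
    rw [show ((m:ℤ)-r) = (((m-k)+(k-r):ℕ):ℤ) by omega,
        show ((k:ℤ)-r) = ((k-r:ℕ):ℤ) by omega,
        show ((n:ℤ)-k+r) = (((n-k)+r:ℕ):ℤ) by omega,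
        C_nat, C_nat]
    ring
  rw [Finset.sum_congr rfl h1]
  rw [show ((m:ℤ)+n-k+1) = (((n-k)+(m-k)+k+1:ℕ):ℤ) by omega,
      show ((k:ℤ)) = ((k:ℕ):ℤ) by norm_num, C_nat]
  rw [← L4 (n-k) (m-k) k]
  push_cast
  rfl

lemma DoubleSum (M N K K' : ℕ) (hKM : K ≤ M) (hKN : K ≤ N) (hK'M : K' ≤ M) (hK'N : K' ≤ N) :
    ∑ l ∈ range (K+1), ∑ l' ∈ range (K'+1),
      (-1:ℤ)^l * (-1:ℤ)^l' * C ((M:ℤ)-l) ((K:ℤ)-l) * C ((N:ℤ)-K+l) (l:ℤ)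
        * C ((M:ℤ)-l') ((K':ℤ)-l') * C ((N:ℤ)-K'+l') (l':ℤ)
        * C ((M:ℤ)+N-K-K') ((M:ℤ)-l-l')
    = (-1:ℤ)^K * (if K = K' then 1 else 0)
        * (C ((M:ℤ)+N-K+1) (K:ℤ) * C ((M:ℤ)+N-2*K) ((M:ℤ)-K)) := by
  rcases Nat.lt_trichotomy K K' with hlt | heq | hgt
  · -- K < K' : inner sums vanish
    rw [if_neg (by omega)]
    have hz : ∀ l ∈ range (K+1), (∑ l' ∈ range (K'+1),
        (-1:ℤ)^l * (-1:ℤ)^l' * C ((M:ℤ)-l) ((K:ℤ)-l) * C ((N:ℤ)-K+l) (l:ℤ)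
        * C ((M:ℤ)-l') ((K':ℤ)-l') * C ((N:ℤ)-K'+l') (l':ℤ)
        * C ((M:ℤ)+N-K-K') ((M:ℤ)-l-l')) = 0 := by
      intro l hl
      have hl' : l < K + 1 := mem_range.mp hl
      have h2 : ∀ l' ∈ range (K'+1),
          (-1:ℤ)^l * (-1:ℤ)^l' * C ((M:ℤ)-l) ((K:ℤ)-l) * C ((N:ℤ)-K+l) (l:ℤ)
          * C ((M:ℤ)-l') ((K':ℤ)-l') * C ((N:ℤ)-K'+l') (l':ℤ)
          * C ((M:ℤ)+N-K-K') ((M:ℤ)-l-l')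
          = ((-1:ℤ)^l * C ((M:ℤ)-l) ((K:ℤ)-l) * C ((N:ℤ)-K+l) (l:ℤ)) *
            ((-1:ℤ)^l' * C ((M:ℤ)-l') ((K':ℤ)-l') * C ((N:ℤ)-K'+l') (l':ℤ)
              * C ((M:ℤ)+N-2*K' + ((K'-K-1+1:ℕ):ℤ)) ((M:ℤ)-l-l')) := by
        intro l' hl'2
        rw [show ((M:ℤ)+N-K-K') = ((M:ℤ)+N-2*K' + ((K'-K-1+1:ℕ):ℤ)) by omega]
        ring
      rw [Finset.sum_congr rfl h2, ← Finset.mul_sum]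
      have h3 : ∀ l' ∈ range (K'+1),
          (-1:ℤ)^l' * C ((M:ℤ)-l') ((K':ℤ)-l') * C ((N:ℤ)-K'+l') (l':ℤ)
              * C ((M:ℤ)+N-2*K' + ((K'-K-1+1:ℕ):ℤ)) ((M:ℤ)-l-l')
          = (-1:ℤ)^l' * C ((M:ℤ)-l') ((K':ℤ)-l') * C ((N:ℤ)-K'+l') (l':ℤ)
              * C ((M:ℤ)+N-2*K' + ((K'-K-1+1:ℕ):ℤ)) ((M:ℤ)-(l:ℕ)-l') := by
        intro l' hl'2
        rw [show ((M:ℤ)-l-l') = ((M:ℤ)-(l:ℕ)-l') by push_cast; ring]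
      rw [Finset.sum_congr rfl h3, Vanish (K'-K-1) M N K' l hK'M hK'N (by omega)]
      ring
    rw [Finset.sum_congr rfl hz, Finset.sum_const, smul_zero]
    ring
  · -- K = K'
    subst heq
    rw [if_pos rfl]
    have hstep : ∀ l ∈ range (K+1), (∑ l' ∈ range (K+1),
        (-1:ℤ)^l * (-1:ℤ)^l' * C ((M:ℤ)-l) ((K:ℤ)-l) * C ((N:ℤ)-K+l) (l:ℤ)
        * C ((M:ℤ)-l') ((K:ℤ)-l') * C ((N:ℤ)-K+l') (l':ℤ)
        * C ((M:ℤ)+N-K-K) ((M:ℤ)-l-l'))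
        = ((-1:ℤ)^K * (C ((M:ℤ)-l) ((K:ℤ)-l) * C ((N:ℤ)-K+l) (l:ℤ)))
          * C ((M:ℤ)+N-2*K) ((M:ℤ)-K) := by
      intro l hl
      have hl' : l < K + 1 := mem_range.mp hl
      have h2 : ∀ l' ∈ range (K+1),
          (-1:ℤ)^l * (-1:ℤ)^l' * C ((M:ℤ)-l) ((K:ℤ)-l) * C ((N:ℤ)-K+l) (l:ℤ)
          * C ((M:ℤ)-l') ((K:ℤ)-l') * C ((N:ℤ)-K+l') (l':ℤ)
          * C ((M:ℤ)+N-K-K) ((M:ℤ)-l-l')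
          = ((-1:ℤ)^l * C ((M:ℤ)-l) ((K:ℤ)-l) * C ((N:ℤ)-K+l) (l:ℤ)) *
            ((-1:ℤ)^l' * C ((M:ℤ)-l') ((K:ℤ)-l') * C ((N:ℤ)-K+l') (l':ℤ)
              * C ((M:ℤ)+N-2*K) ((M:ℤ)-(l:ℕ)-l')) := by
        intro l' hl'2
        rw [show ((M:ℤ)+N-K-K) = ((M:ℤ)+N-2*K) by ring]
        ring
      rw [Finset.sum_congr rfl h2, ← Finset.mul_sum]
      have hS := KeyB (M+N) M N K l le_rfl hKM hKN (by omega)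
      unfold S at hS
      rw [hS]
      have e3 : (-1:ℤ)^l * (-1:ℤ)^(K-l) = (-1:ℤ)^K := by
        rw [← pow_add, show l + (K-l) = K by omega]
      calc ((-1:ℤ)^l * C ((M:ℤ)-l) ((K:ℤ)-l) * C ((N:ℤ)-K+l) (l:ℤ))
            * ((-1:ℤ)^(K-l) * C ((M:ℤ)+N-2*K) ((M:ℤ)-K))
          = ((-1:ℤ)^l * (-1:ℤ)^(K-l)) * (C ((M:ℤ)-l) ((K:ℤ)-l) * C ((N:ℤ)-K+l) (l:ℤ))
            * C ((M:ℤ)+N-2*K) ((M:ℤ)-K) := by ring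
        _ = ((-1:ℤ)^K * (C ((M:ℤ)-l) ((K:ℤ)-l) * C ((N:ℤ)-K+l) (l:ℤ)))
            * C ((M:ℤ)+N-2*K) ((M:ℤ)-K) := by rw [e3]
    rw [Finset.sum_congr rfl hstep]
    have hfin : ∑ l ∈ range (K+1),
        ((-1:ℤ)^K * (C ((M:ℤ)-l) ((K:ℤ)-l) * C ((N:ℤ)-K+l) (l:ℤ)))
          * C ((M:ℤ)+N-2*K) ((M:ℤ)-K)
        = ((-1:ℤ)^K * C ((M:ℤ)+N-2*K) ((M:ℤ)-K)) *
            ∑ l ∈ range (K+1), C ((M:ℤ)-l) ((K:ℤ)-l) * C ((N:ℤ)-K+l) (l:ℤ) := by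
      rw [Finset.mul_sum]
      apply Finset.sum_congr rfl
      intro l hl
      ring
    rw [hfin, L4C M N K hKM hKN]
    ring
  · -- K > K' : swap sums
    rw [if_neg (by omega), Finset.sum_comm]
    have hz : ∀ l' ∈ range (K'+1), (∑ l ∈ range (K+1),
        (-1:ℤ)^l * (-1:ℤ)^l' * C ((M:ℤ)-l) ((K:ℤ)-l) * C ((N:ℤ)-K+l) (l:ℤ)
        * C ((M:ℤ)-l') ((K':ℤ)-l') * C ((N:ℤ)-K'+l') (l':ℤ)
        * C ((M:ℤ)+N-K-K') ((M:ℤ)-l-l')) = 0 := by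
      intro l' hl'
      have hl'2 : l' < K' + 1 := mem_range.mp hl'
      have h2 : ∀ l ∈ range (K+1),
          (-1:ℤ)^l * (-1:ℤ)^l' * C ((M:ℤ)-l) ((K:ℤ)-l) * C ((N:ℤ)-K+l) (l:ℤ)
          * C ((M:ℤ)-l') ((K':ℤ)-l') * C ((N:ℤ)-K'+l') (l':ℤ)
          * C ((M:ℤ)+N-K-K') ((M:ℤ)-l-l')
          = ((-1:ℤ)^l' * C ((M:ℤ)-l') ((K':ℤ)-l') * C ((N:ℤ)-K'+l') (l':ℤ)) *
            ((-1:ℤ)^l * C ((M:ℤ)-l) ((K:ℤ)-l) * C ((N:ℤ)-K+l) (l:ℤ)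
              * C ((M:ℤ)+N-2*K + ((K-K'-1+1:ℕ):ℤ)) ((M:ℤ)-(l':ℕ)-l)) := by
        intro l hl2
        rw [show ((M:ℤ)+N-K-K') = ((M:ℤ)+N-2*K + ((K-K'-1+1:ℕ):ℤ)) by omega,
            show ((M:ℤ)-l-l') = ((M:ℤ)-(l':ℕ)-l) by push_cast; ring]
        ring
      rw [Finset.sum_congr rfl h2, ← Finset.mul_sum,
          Vanish (K-K'-1) M N K l' hKM hKN (by omega)]
      ring
    rw [Finset.sum_congr rfl hz, Finset.sum_const, smul_zero]
    ring

lemma c_zero_of_neg (m n k i j : ℤ) (hk : 0 ≤ k) (hj : j < 0) : c m n k i j = 0 := by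
  unfold c
  apply Finset.sum_eq_zero
  intro l hl
  have hl' : l < k.toNat + 1 := mem_range.mp hl
  have hlk : (l : ℤ) ≤ k := by omega
  rw [C_gt (show i + j - k < i - l by omega)]
  ring


theorem orthogonality_relations_first (m n k k' p : ℤ)
    (hm : 0 ≤ m) (hn : 0 ≤ n)
    (hk0 : 0 ≤ k) (hkm : k ≤ m) (hkn : k ≤ n)
    (hk'0 : 0 ≤ k') (hk'm : k' ≤ m) (hk'n : k' ≤ n)
    (hp1 : max k k' ≤ p) (hp2 : p ≤ m + n - max k k') :
    ∑ i ∈ (Finset.Icc (0 : ℤ) m).filter (fun i => 0 ≤ p - i ∧ p - i ≤ n),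
      c m n k i (p - i) * c m n k' (m - i) (n - (p - i)) =
    (-1 : ℤ) ^ k.toNat * (if k = k' then 1 else 0) * D m n k := by
  have hkp : k ≤ p := le_trans (le_max_left _ _) hp1
  have hk'p : k' ≤ p := le_trans (le_max_right _ _) hp1
  have hpk : p ≤ m + n - k := le_trans hp2 (by omega)
  have hpk' : p ≤ m + n - k' := le_trans hp2 (by
    have := le_max_right k k'; omega)
  clear hp1 hp2
  obtain ⟨M, rfl⟩ : ∃ M:ℕ, m = (M:ℤ) := ⟨m.toNat, (Int.toNat_of_nonneg hm).symm⟩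
  obtain ⟨N, rfl⟩ : ∃ N:ℕ, n = (N:ℤ) := ⟨n.toNat, (Int.toNat_of_nonneg hn).symm⟩
  obtain ⟨K, rfl⟩ : ∃ K:ℕ, k = (K:ℤ) := ⟨k.toNat, (Int.toNat_of_nonneg hk0).symm⟩
  obtain ⟨K', rfl⟩ : ∃ K':ℕ, k' = (K':ℤ) := ⟨k'.toNat, (Int.toNat_of_nonneg hk'0).symm⟩
  obtain ⟨P, rfl⟩ : ∃ P:ℕ, p = (P:ℤ) := ⟨p.toNat, (Int.toNat_of_nonneg (by omega)).symm⟩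
  -- step 1 : remove the filter
  rw [Finset.sum_filter_of_ne (by
    intro i hi hne
    by_contra hcon
    apply hne
    rcases lt_or_ge ((P:ℤ) - i) 0 with h2 | h2
    · rw [c_zero_of_neg _ _ _ _ _ hk0 h2]; ring
    · rcases le_or_gt ((P:ℤ) - i) (N:ℤ) with h3 | h3
      · exact absurd ⟨h2, h3⟩ hcon
      · rw [c_zero_of_neg (M:ℤ) (N:ℤ) (K':ℤ) ((M:ℤ) - i) ((N:ℤ) - ((P:ℤ) - i)) hk'0
          (by omega)]
        ring)]
  have hKM : K ≤ M := by exact_mod_cast hkm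
  have hKN : K ≤ N := by exact_mod_cast hkn
  have hK'M : K' ≤ M := by exact_mod_cast hk'm
  have hK'N : K' ≤ N := by exact_mod_cast hk'n
  -- step 2 : expand the two c's
  have hexp : ∀ i ∈ Finset.Icc (0:ℤ) (M:ℤ),
      c (M:ℤ) (N:ℤ) (K:ℤ) i ((P:ℤ) - i) * c (M:ℤ) (N:ℤ) (K':ℤ) ((M:ℤ) - i) ((N:ℤ) - ((P:ℤ) - i))
      = ∑ l ∈ range (K+1), ∑ l' ∈ range (K'+1),
          ((-1:ℤ)^l * (-1:ℤ)^l' * C ((M:ℤ)-l) ((K:ℤ)-l) * C ((N:ℤ)-K+l) (l:ℤ)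
            * C ((M:ℤ)-l') ((K':ℤ)-l') * C ((N:ℤ)-K'+l') (l':ℤ))
          * (C ((P:ℤ)-(K:ℤ)) (i - (l:ℤ)) * C ((M:ℤ)+(N:ℤ)-(P:ℤ)-(K':ℤ)) (((M:ℤ)-(l':ℤ)) - i)) := by
    intro i hi
    unfold c
    simp only [Int.toNat_natCast]
    rw [Finset.sum_mul_sum]
    apply Finset.sum_congr rfl
    intro l hl
    apply Finset.sum_congr rfl
    intro l' hl'
    rw [show (i + ((P:ℤ) - i) - (K:ℤ)) = (P:ℤ) - (K:ℤ) by ring,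
        show ((M:ℤ) - i + ((N:ℤ) - ((P:ℤ) - i)) - (K':ℤ)) = (M:ℤ)+(N:ℤ)-(P:ℤ)-(K':ℤ) by ring,
        show ((M:ℤ) - i - (l':ℤ)) = ((M:ℤ)-(l':ℤ)) - i by ring]
    ring
  rw [Finset.sum_congr rfl hexp]
  rw [Finset.sum_comm]
  have hswap : ∀ l ∈ range (K+1),
      (∑ i ∈ Finset.Icc (0:ℤ) (M:ℤ), ∑ l' ∈ range (K'+1),
          ((-1:ℤ)^l * (-1:ℤ)^l' * C ((M:ℤ)-l) ((K:ℤ)-l) * C ((N:ℤ)-K+l) (l:ℤ)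
            * C ((M:ℤ)-l') ((K':ℤ)-l') * C ((N:ℤ)-K'+l') (l':ℤ))
          * (C ((P:ℤ)-(K:ℤ)) (i - (l:ℤ)) * C ((M:ℤ)+(N:ℤ)-(P:ℤ)-(K':ℤ)) (((M:ℤ)-(l':ℤ)) - i)))
      = ∑ l' ∈ range (K'+1), ∑ i ∈ Finset.Icc (0:ℤ) (M:ℤ),
          ((-1:ℤ)^l * (-1:ℤ)^l' * C ((M:ℤ)-l) ((K:ℤ)-l) * C ((N:ℤ)-K+l) (l:ℤ)
            * C ((M:ℤ)-l') ((K':ℤ)-l') * C ((N:ℤ)-K'+l') (l':ℤ))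
          * (C ((P:ℤ)-(K:ℤ)) (i - (l:ℤ)) * C ((M:ℤ)+(N:ℤ)-(P:ℤ)-(K':ℤ)) (((M:ℤ)-(l':ℤ)) - i)) := by
    intro l hl
    exact Finset.sum_comm
  rw [Finset.sum_congr rfl hswap]
  have hinner : ∀ l ∈ range (K+1),
      (∑ l' ∈ range (K'+1), ∑ i ∈ Finset.Icc (0:ℤ) (M:ℤ),
          ((-1:ℤ)^l * (-1:ℤ)^l' * C ((M:ℤ)-l) ((K:ℤ)-l) * C ((N:ℤ)-K+l) (l:ℤ)
            * C ((M:ℤ)-l') ((K':ℤ)-l') * C ((N:ℤ)-K'+l') (l':ℤ))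
          * (C ((P:ℤ)-(K:ℤ)) (i - (l:ℤ)) * C ((M:ℤ)+(N:ℤ)-(P:ℤ)-(K':ℤ)) (((M:ℤ)-(l':ℤ)) - i)))
      = ∑ l' ∈ range (K'+1),
          (-1:ℤ)^l * (-1:ℤ)^l' * C ((M:ℤ)-l) ((K:ℤ)-l) * C ((N:ℤ)-K+l) (l:ℤ)
            * C ((M:ℤ)-l') ((K':ℤ)-l') * C ((N:ℤ)-K'+l') (l':ℤ)
            * C ((M:ℤ)+N-K-K') ((M:ℤ)-l-l') := by
    intro l hl
    have hl2 : l < K + 1 := mem_range.mp hl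
    apply Finset.sum_congr rfl
    intro l' hl'
    have hl'2 : l' < K' + 1 := mem_range.mp hl'
    rw [← Finset.mul_sum,
        vand M ((P:ℤ)-(K:ℤ)) ((M:ℤ)+(N:ℤ)-(P:ℤ)-(K':ℤ)) (l:ℤ) ((M:ℤ)-(l':ℤ))
          (by omega) (by omega) (by omega) (by omega),
        show ((P:ℤ)-(K:ℤ) + ((M:ℤ)+(N:ℤ)-(P:ℤ)-(K':ℤ))) = ((M:ℤ)+N-K-K') by ring,
        show ((M:ℤ)-(l':ℤ) - (l:ℤ)) = ((M:ℤ)-l-l') by ring]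
  rw [Finset.sum_congr rfl hinner, DoubleSum M N K K' hKM hKN hK'M hK'N]
  simp only [Int.toNat_natCast, Nat.cast_inj]
  unfold D
  ring
end

section
/- (Modified transpose Regge symmetry.) For integers m, n, k, i, j with the nine quantities n−k, m−k, k, i, j, m+n−i−j−k, m−i, n−j, i+j−k all nonnegative, one has C(m−k+j, m−k) · c_{m, n−k+i, i}(k, i+j−k) = C(m−k+j, m−i) · c_{m,n,k}(i, j). -/
lemma key (a b d e : ℕ) (h : d ≤ a + b) :
    (a+b+e).choose a * (b+e).choose b * (a+b).choose d =
    (a+b+e).choose (a+b-d) * (d+e).choose d * (a+b).choose b := by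
  have hq : (((a+b+e).choose a : ℚ)) * (b+e).choose b * (a+b).choose d =
      ((a+b+e).choose (a+b-d) : ℚ) * (d+e).choose d * (a+b).choose b := by
    rw [Nat.cast_choose ℚ (by omega : a ≤ a+b+e),
        Nat.cast_choose ℚ (by omega : b ≤ b+e),
        Nat.cast_choose ℚ h,
        Nat.cast_choose ℚ (by omega : a+b-d ≤ a+b+e),
        Nat.cast_choose ℚ (by omega : d ≤ d+e),
        Nat.cast_choose ℚ (by omega : b ≤ a+b)]
    have e1 : a+b+e-a = b+e := by omega
    have e2 : b+e-b = e := by omega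
    have e4 : a+b+e-(a+b-d) = d+e := by omega
    have e5 : d+e-d = e := by omega
    have e6 : a+b-b = a := by omega
    rw [e1, e2, e4, e5, e6]
    have hne : ∀ n : ℕ, (Nat.factorial n : ℚ) ≠ 0 := fun n => Nat.cast_ne_zero.2 (Nat.factorial_ne_zero _)
    field_simp
  exact_mod_cast hq

lemma term_eq (m k i j : ℤ) (l : ℕ) (h2 : 0 ≤ m - k) (h3 : 0 ≤ k) (h4 : 0 ≤ i)
    (h5 : 0 ≤ j) (h7 : 0 ≤ m - i) (h9 : 0 ≤ i + j - k) :
    C (m-k+j) (m-k) * (C j (k-l) * C (m-l) (i-l)) =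
    C (m-k+j) (m-i) * (C (i+j-k) (i-l) * C (m-l) (k-l)) := by
  by_cases hk : k - (l:ℤ) < 0
  · rw [show C j (k-l) = 0 from if_neg (by omega), show C (m-l) (k-l) = 0 from if_neg (by omega)]
    ring
  by_cases hi : i - (l:ℤ) < 0
  · rw [show C (m-l) (i-l) = 0 from if_neg (by omega),
        show C (i+j-k) (i-l) = 0 from if_neg (by omega)]
    ring
  by_cases hj : j - k + l < 0
  · rw [show C j (k-l) = 0 from if_neg (by omega),
        show C (i+j-k) (i-l) = 0 from if_neg (by omega)]
    ring
  · -- main case: all in range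
    push_neg at hk hi hj
    set a := (m-k).toNat with ha
    set b := (k-(l:ℤ)).toNat with hb
    set d := (i-(l:ℤ)).toNat with hd
    set e := (j-k+l).toNat with he
    rw [show C (m-k+j) (m-k) = ((a+b+e).choose a : ℤ) by
          rw [C, if_pos (by omega)]; norm_cast; congr 1 <;> omega,
        show C j (k-(l:ℤ)) = ((b+e).choose b : ℤ) by
          rw [C, if_pos (by omega)]; norm_cast; congr 1 <;> omega,
        show C (m-l) (i-(l:ℤ)) = ((a+b).choose d : ℤ) by
          rw [C, if_pos (by omega)]; norm_cast; congr 1 <;> omega,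
        show C (m-k+j) (m-i) = ((a+b+e).choose (a+b-d) : ℤ) by
          rw [C, if_pos (by omega)]; norm_cast; congr 1 <;> omega,
        show C (i+j-k) (i-(l:ℤ)) = ((d+e).choose d : ℤ) by
          rw [C, if_pos (by omega)]; norm_cast; congr 1 <;> omega,
        show C (m-l) (k-(l:ℤ)) = ((a+b).choose b : ℤ) by
          rw [C, if_pos (by omega)]; norm_cast; congr 1 <;> omega]
    rw [← mul_assoc, ← mul_assoc]
    exact_mod_cast key a b d e (by omega)

theorem regge_modified_transpose_symmetry (m n k i j : ℤ)
    (h1 : 0 ≤ n - k) (h2 : 0 ≤ m - k) (h3 : 0 ≤ k) (h4 : 0 ≤ i) (h5 : 0 ≤ j)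
    (h6 : 0 ≤ m + n - i - j - k) (h7 : 0 ≤ m - i) (h8 : 0 ≤ n - j) (h9 : 0 ≤ i + j - k) :
    C (m - k + j) (m - k) * c m (n - k + i) i k (i + j - k) =
    C (m - k + j) (m - i) * c m n k i j := by
  simp only [c, Finset.mul_sum]
  set N := max i.toNat k.toNat + 1 with hN
  have hLs : Finset.range (i.toNat + 1) ⊆ Finset.range N :=
    Finset.range_subset_range.2 (by omega)
  have hRs : Finset.range (k.toNat + 1) ⊆ Finset.range N :=
    Finset.range_subset_range.2 (by omega)
  rw [show (∑ l ∈ Finset.range (i.toNat + 1), C (m-k+j) (m-k) *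
        ((-1:ℤ)^l * C (k + (i+j-k) - i) (k - l) * C (m - l) (i - l) * C ((n-k+i) - i + l) l))
      = ∑ l ∈ Finset.range N, C (m-k+j) (m-k) *
        ((-1:ℤ)^l * C (k + (i+j-k) - i) (k - l) * C (m - l) (i - l) * C ((n-k+i) - i + l) l) from
    Finset.sum_subset hLs (by
      intro x hx hnx
      simp only [Finset.mem_range] at hx hnx
      rw [show C (m - x) (i - x) = 0 from if_neg (by omega)]
      ring)]
  rw [show (∑ l ∈ Finset.range (k.toNat + 1), C (m-k+j) (m-i) *
        ((-1:ℤ)^l * C (i+j-k) (i - l) * C (m - l) (k - l) * C (n-k+l) l))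
      = ∑ l ∈ Finset.range N, C (m-k+j) (m-i) *
        ((-1:ℤ)^l * C (i+j-k) (i - l) * C (m - l) (k - l) * C (n-k+l) l) from
    Finset.sum_subset hRs (by
      intro x hx hnx
      simp only [Finset.mem_range] at hx hnx
      rw [show C (m - x) (k - x) = 0 from if_neg (by omega)]
      ring)]
  apply Finset.sum_congr rfl
  intro l _
  have e1 : k + (i+j-k) - i = j := by ring
  have e2 : (n-k+i) - i + (l:ℤ) = n - k + l := by ring
  rw [e1, e2]
  have := term_eq m k i j l h2 h3 h4 h5 h7 h9
  linear_combination ((-1:ℤ)^l * C (n-k+l) l) * this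
end

section
/- (R13 Regge symmetry.) For integers m, n, k, i, j with the nine quantities n−k, m−k, k, i, j, m+n−i−j−k, m−i, n−j, i+j−k all nonnegative, setting m' = n−k+i, n' = m−k+j, k' = i+j−k, one has M(m+n−k; m−k, n−k, k) · c_{m',n',k'}(i, j) = (-1)^i · M(m+n−k; m−i, n−j, k') · c_{m,n,k}(i, j), where M(a+b+c; a, b, c) = (a+b+c)!/(a!·b!·c!) denotes the multinomial coefficient. -/
/-- The multinomial coefficient `M(a+b+c; a, b, c) = (a+b+c)!/(a! b! c!)`
for integer arguments (interpreted via `toNat`). -/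
def M (a b c : ℤ) : ℤ :=
  ((a + b + c).toNat.factorial / (a.toNat.factorial * b.toNat.factorial * c.toNat.factorial) : ℕ)

lemma C_eq_zero {a b : ℤ} (h : ¬(0 ≤ b ∧ b ≤ a)) : C a b = 0 := by simp only [C, if_neg h]

lemma C_cast {a b : ℤ} (hb : 0 ≤ b) (hba : b ≤ a) :
    (C a b : ℚ) = a.toNat.factorial / (b.toNat.factorial * (a.toNat - b.toNat).factorial) := by
  have h : b.toNat ≤ a.toNat := by omega
  rw [C, if_pos ⟨hb, hba⟩]; push_cast; exact Nat.cast_choose ℚ h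

lemma M_cast {a b c : ℤ} (ha : 0 ≤ a) (hb : 0 ≤ b) (hc : 0 ≤ c) :
    (M a b c : ℚ) = ((a.toNat + b.toNat + c.toNat).factorial : ℚ) /
      (a.toNat.factorial * b.toNat.factorial * c.toNat.factorial) := by
  have h : (a + b + c).toNat = a.toNat + b.toNat + c.toNat := by omega
  have hdvd : a.toNat.factorial * b.toNat.factorial * c.toNat.factorial ∣
      (a.toNat + b.toNat + c.toNat).factorial :=
    (mul_dvd_mul_right (Nat.factorial_mul_factorial_dvd_factorial_add _ _) _).trans
      (Nat.factorial_mul_factorial_dvd_factorial_add _ _)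
  rw [M, h, Int.cast_natCast, Nat.cast_div hdvd (by push_cast; positivity)]; push_cast; ring

lemma regge_key (m n k i j s : ℤ)
    (h1 : 0 ≤ n - k) (h2 : 0 ≤ m - k) (h3 : 0 ≤ k) (h4 : 0 ≤ i) (h5 : 0 ≤ j)
    (h7 : 0 ≤ m - i) (h8 : 0 ≤ n - j) (h9 : 0 ≤ i + j - k)
    (hs0 : 0 ≤ s) (hsi : s ≤ i) :
    M (m-k) (n-k) k * (C k s * C (n-k+s) (j-k+s) * C (m-s) (i-s)) =
    M (m-i) (n-j) (i+j-k) * (C (i+j-k) (i-s) * C (m-s) (k-s) * C (n-k+s) s) := by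
  by_cases hkj : k ≤ j + s
  · by_cases hsk : s ≤ k
    · have : ((M (m-k) (n-k) k * (C k s * C (n-k+s) (j-k+s) * C (m-s) (i-s)) : ℤ) : ℚ) =
          ((M (m-i) (n-j) (i+j-k) * (C (i+j-k) (i-s) * C (m-s) (k-s) * C (n-k+s) s) : ℤ) : ℚ) := by
        push_cast
        rw [M_cast h2 h1 h3, M_cast h7 h8 h9,
          C_cast hs0 hsk, C_cast (by omega) (by omega), C_cast (by omega) (by omega),
          C_cast (by omega) (by omega), C_cast (by omega) (by omega), C_cast hs0 (by omega)]
        rw [show (m-k).toNat + (n-k).toNat + k.toNat = (m+n-k).toNat by omega,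
          show (m-i).toNat + (n-j).toNat + (i+j-k).toNat = (m+n-k).toNat by omega,
          show k.toNat - s.toNat = (k-s).toNat by omega,
          show (n-k+s).toNat - (j-k+s).toNat = (n-j).toNat by omega,
          show (m-s).toNat - (i-s).toNat = (m-i).toNat by omega,
          show (i+j-k).toNat - (i-s).toNat = (j-k+s).toNat by omega,
          show (m-s).toNat - (k-s).toNat = (m-k).toNat by omega,
          show (n-k+s).toNat - s.toNat = (n-k).toNat by omega]
        generalize (m+n-k).toNat.factorial = F1
        have h := fun x : ℕ => (Nat.cast_ne_zero (R := ℚ)).mpr x.factorial_ne_zero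
        field_simp
      exact_mod_cast this
    · rw [C_eq_zero (a := k) (b := s) (by omega),
        C_eq_zero (a := m - s) (b := k - s) (by omega)]
      ring
  · rw [C_eq_zero (a := n-k+s) (b := j-k+s) (by omega),
      C_eq_zero (a := i+j-k) (b := i-s) (by omega)]
    ring

lemma sum_shrink {f : ℕ → ℤ} {a b : ℕ} (hab : a ≤ b) (h : ∀ l, a ≤ l → f l = 0) :
    ∑ l ∈ Finset.range b, f l = ∑ l ∈ Finset.range a, f l :=
  (Finset.sum_subset (Finset.range_subset_range.mpr hab)
    (fun x _ hx => h x (by simpa using hx))).symm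

theorem regge_R13_symmetry (m n k i j : ℤ)
    (h1 : 0 ≤ n - k) (h2 : 0 ≤ m - k) (h3 : 0 ≤ k) (h4 : 0 ≤ i) (h5 : 0 ≤ j)
    (h6 : 0 ≤ m + n - i - j - k) (h7 : 0 ≤ m - i) (h8 : 0 ≤ n - j) (h9 : 0 ≤ i + j - k) :
    M (m - k) (n - k) k * c (n - k + i) (m - k + j) (i + j - k) i j =
    (-1 : ℤ) ^ i.toNat * M (m - i) (n - j) (i + j - k) * c m n k i j := by
  set I := i.toNat with hI
  set t : ℕ → ℤ := fun l =>
    (-1 : ℤ) ^ l * C (i + j - (i + j - k)) (i - l) *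
      C (n - k + i - l) (i + j - k - l) * C (m - k + j - (i + j - k) + l) l with ht
  set T : ℕ → ℤ := fun l =>
    (-1 : ℤ) ^ l * C (i + j - k) (i - l) * C (m - l) (k - l) * C (n - k + l) l with hT
  have hcL : c (n - k + i) (m - k + j) (i + j - k) i j =
      ∑ l ∈ Finset.range ((i + j - k).toNat + 1), t l := rfl
  have hcR : c m n k i j = ∑ l ∈ Finset.range (k.toNat + 1), T l := rfl
  set B : ℕ := max (max ((i+j-k).toNat) k.toNat) I + 1 with hB
  have ht0 : ∀ l : ℕ, (i+j-k) < l → t l = 0 := fun l hl => by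
    rw [ht]; dsimp only
    rw [C_eq_zero (a := n - k + i - l) (b := i + j - k - l) (by omega)]; ring
  have ht0' : ∀ l : ℕ, i < l → t l = 0 := fun l hl => by
    rw [ht]; dsimp only
    rw [C_eq_zero (a := i + j - (i+j-k)) (b := i - l) (by omega)]; ring
  have hT0 : ∀ l : ℕ, k < l → T l = 0 := fun l hl => by
    rw [hT]; dsimp only
    rw [C_eq_zero (a := m - l) (b := k - l) (by omega)]; ring
  have hT0' : ∀ l : ℕ, i < l → T l = 0 := fun l hl => by
    rw [hT]; dsimp only
    rw [C_eq_zero (a := i + j - k) (b := i - l) (by omega)]; ring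
  have hL2 : c (n - k + i) (m - k + j) (i + j - k) i j = ∑ l ∈ Finset.range (I + 1), t l := by
    rw [hcL, ← sum_shrink (a := (i+j-k).toNat + 1) (b := B) (by omega)
        (fun l hl => ht0 l (by omega)),
      sum_shrink (a := I + 1) (b := B) (by omega) (fun l hl => ht0' l (by omega))]
  have hR2 : c m n k i j = ∑ l ∈ Finset.range (I + 1), T l := by
    rw [hcR, ← sum_shrink (a := k.toNat + 1) (b := B) (by omega)
        (fun l hl => hT0 l (by omega)),
      sum_shrink (a := I + 1) (b := B) (by omega) (fun l hl => hT0' l (by omega))]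
  have hrefl : ∑ l ∈ Finset.range (I + 1), t l = ∑ s ∈ Finset.range (I + 1), t (I - s) := by
    refine (Finset.sum_range_reflect t (I + 1)).symm.trans ?_
    exact Finset.sum_congr rfl fun s _ => by rw [Nat.add_sub_cancel]
  rw [hL2, hR2, hrefl]
  simp only [Finset.mul_sum]
  refine Finset.sum_congr rfl (fun s hs => ?_)
  have hsI : s ≤ I := by simp only [Finset.mem_range] at hs; omega
  have hsub : ((I - s : ℕ) : ℤ) = i - s := by omega
  have hsi : (s : ℤ) ≤ i := by omega
  rw [ht, hT]; dsimp only
  rw [hsub,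
    show i - (i - (s:ℤ)) = (s:ℤ) by ring,
    show i + j - (i + j - k) = k by ring,
    show n - k + i - (i - (s:ℤ)) = n - k + s by ring,
    show i + j - k - (i - (s:ℤ)) = j - k + s by ring,
    show m - k + j - (i + j - k) + (i - (s:ℤ)) = m - s by ring]
  have hsign : (-1 : ℤ) ^ (I - s) = (-1) ^ I * (-1) ^ s := by
    rw [show I = (I - s) + s by omega, pow_add, mul_assoc, ← pow_add,
      show s + s = 2 * s by ring, pow_mul]
    norm_num
  have hkey := regge_key m n k i j s h1 h2 h3 h4 h5 h7 h8 h9 (by omega) hsi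
  rw [hsign]
  linear_combination ((-1:ℤ)^I * (-1)^s) * hkey
end
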